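/- The branching bisimulation game characterises branching bisimilarity: for every labelled transition system and all states s, t, we have s ≈b t if and only if s ≡b t. -/
import Mathlib


namespace GamesBisim

/-- Parameter values `o` (ordinary) and `b` (branching) for generic bisimulations. -/
inductive XY | o | b
deriving DecidableEq

/-- The faces ☹ (frown) and ☺ (smile). -/
inductive Face | frown | smile
deriving DecidableEq

/-- Rewards: `*` (star) and `✓` (check). -/
inductive Rw | star | check
deriving DecidableEq

/-- A labelled transition system with states `S`, actions `A` containing a
distinguished silent action `tau`, and a transition relation. -/
structure LTS (S : Type u) (A : Type v) where
  tau : A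
  Trans : S → A → S → Prop

namespace LTS

variable {S : Type u} {A : Type v}

/-- A single silent (τ) step. -/
def TauStep (L : LTS S A) (s s' : S) : Prop := L.Trans s L.tau s'

/-- `↠`: the reflexive-transitive closure of the τ-step relation. -/
def TauStar (L : LTS S A) : S → S → Prop := Relation.ReflTransGen L.TauStep

/-- `↠⁺`: the transitive closure of the τ-step relation. -/
def TauPlus (L : LTS S A) : S → S → Prop := Relation.TransGen L.TauStep

/-- An LTS is non-divergent if it admits no infinite sequence of τ-steps. -/
def NonDivergent (L : LTS S A) : Prop :=
  ¬ ∃ f : ℕ → S, ∀ i, L.TauStep (f i) (f (i + 1))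

/-- A symmetric relation `R` is a branching bisimulation. -/
def IsBranchingBisim (L : LTS S A) (R : S → S → Prop) : Prop :=
  (∀ s t, R s t → R t s) ∧
  ∀ s t a s', R s t → L.Trans s a s' →
    (a = L.tau ∧ R s' t) ∨
    ∃ t1 t', L.TauStar t t1 ∧ L.Trans t1 a t' ∧ R s t1 ∧ R s' t'

/-- Branching bisimilarity `≈b`. -/
def BranchingBisimilar (L : LTS S A) (s t : S) : Prop :=
  ∃ R, L.IsBranchingBisim R ∧ R s t

/-- A symmetric relation `R` is a delay bisimulation. -/
def IsDelayBisim (L : LTS S A) (R : S → S → Prop) : Prop :=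
  (∀ s t, R s t → R t s) ∧
  ∀ s t a s', R s t → L.Trans s a s' →
    (a = L.tau ∧ R s' t) ∨
    ∃ t1 t', L.TauStar t t1 ∧ L.Trans t1 a t' ∧ R s' t'

/-- The generalised weak transition `s ↠_{x,R,t} s'`: a weak transition `s ↠ s'`,
which in case `x = b` additionally satisfies `t R s` and `t R s'`. -/
def GenTauStar (L : LTS S A) (x : XY) (R : S → S → Prop) (t : S) (s s' : S) : Prop :=
  L.TauStar s s' ∧ (x = XY.b → R t s ∧ R t s')

/-- The strong generalised weak transition `s ⟹_{x,R,t} s'`: a weak transition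
`s ↠ s'`, which in case `x = b` is witnessed by a finite τ-path all of whose states
are related to `t` by `R`. -/
def SGenTauStar (L : LTS S A) (x : XY) (R : S → S → Prop) (t : S) (s s' : S) : Prop :=
  L.TauStar s s' ∧
  (x = XY.b → R t s ∧ Relation.ReflTransGen (fun u u' => L.TauStep u u' ∧ R t u') s s')

/-- A symmetric relation `R` is an `(x,y)`-generic bisimulation. -/
def IsGenBisim (L : LTS S A) (x y : XY) (R : S → S → Prop) : Prop :=
  (∀ s t, R s t → R t s) ∧
  ∀ s t a s', R s t → L.Trans s a s' →
    (a = L.tau ∧ R s' t) ∨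
    ∃ t1 t2 t', L.GenTauStar x R s t t1 ∧ L.Trans t1 a t2 ∧
      L.GenTauStar y R s' t2 t' ∧ R s' t'

/-- `(x,y)`-generic bisimilarity `≈_{(x,y)}`. -/
def GenBisimilar (L : LTS S A) (x y : XY) (s t : S) : Prop :=
  ∃ R, L.IsGenBisim x y R ∧ R s t

/-- A symmetric relation `R` is an `(x,y)`-generic bisimulation with explicit
divergence (divergence condition D₄). -/
def IsGenBisimED (L : LTS S A) (x y : XY) (R : S → S → Prop) : Prop :=
  L.IsGenBisim x y R ∧
  ∀ s t, R s t → ∀ f : ℕ → S, f 0 = s → (∀ i, L.TauStep (f i) (f (i + 1))) →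
    ∃ t' k, L.TauPlus t t' ∧ R (f k) t'

/-- `(x,y)`-generic bisimilarity with explicit divergence `≈ed_{(x,y)}`. -/
def GenBisimilarED (L : LTS S A) (x y : XY) (s t : S) : Prop :=
  ∃ R, L.IsGenBisimED x y R ∧ R s t

end LTS

/-- A relation `R` has the stuttering property: whenever
`t₀ →τ t₁ →τ ⋯ →τ t_k` and `t₀ R t_k`, then `t_i R t_j` for all `0 ≤ i,j ≤ k`. -/
def StutteringProperty {S : Type u} {A : Type v} (L : LTS S A) (R : S → S → Prop) : Prop :=
  ∀ (k : ℕ) (t : ℕ → S),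
    (∀ i < k, L.TauStep (t i) (t (i + 1))) → R (t 0) (t k) →
    ∀ i j, i ≤ k → j ≤ k → R (t i) (t j)

/-! ## Two-player games

A play is a maximal (finite or infinite) sequence of configurations connected by
moves, represented as `π : ℕ → Option C` which is `none` from the point (if any)
where the play has ended; a play may only end in a configuration whose owner is
stuck. A strategy for a player is a (positional) function `σ : C → C` which is
required to pick a legal move at every configuration owned by that player admitting
at least one move; a play is consistent with `σ` if every move taken from a
configuration owned by that player follows `σ`. -/

section Games

variable {C : Type u}

/-- `π` is a maximal play of the game with move relation `move`. -/
def IsPlay (move : C → C → Prop) (π : ℕ → Option C) : Prop :=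
  (∀ i c d, π i = some c → π (i + 1) = some d → move c d) ∧
  (∀ i c, π i = some c → π (i + 1) = none → ∀ d, ¬ move c d) ∧
  (∀ i, π i = none → π (i + 1) = none)

/-- The play `π` is consistent with strategy `σ` of the player owning the
configurations satisfying `owned`. -/
def ConsistentWith (owned : C → Prop) (σ : C → C) (π : ℕ → Option C) : Prop :=
  ∀ i c d, π i = some c → owned c → π (i + 1) = some d → d = σ c

/-- `σ` is a valid strategy for the player owning the configurations satisfying
`owned`: it picks a legal move wherever a move exists. -/
def ValidStrategy (owned : C → Prop) (move : C → C → Prop) (σ : C → C) : Prop :=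
  ∀ c, owned c → (∃ d, move c d) → move c (σ c)

/-- The play `π` is finite and ends in the configuration `c`. -/
def EndsAt (π : ℕ → Option C) (c : C) : Prop := ∃ i, π i = some c ∧ π (i + 1) = none

/-- The play `π` is infinite. -/
def InfinitePlay (π : ℕ → Option C) : Prop := ∀ i, π i ≠ none

/-- The Büchi winning condition on infinite plays: the play passes through
infinitely many configurations carrying a `✓` reward. -/
def BuchiWin (reward : C → Prop) (π : ℕ → Option C) : Prop :=
  ∀ n, ∃ i, n ≤ i ∧ ∃ c, π i = some c ∧ reward c

/-- Duplicator wins the play `π`: either the play is finite and Spoiler is stuck,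
or the play is infinite and satisfies the winning condition `infWin`. -/
def DupWinsPlay (dupOwned : C → Prop) (infWin : (ℕ → Option C) → Prop)
    (π : ℕ → Option C) : Prop :=
  (∃ c, EndsAt π c ∧ ¬ dupOwned c) ∨ (InfinitePlay π ∧ infWin π)

/-- Spoiler wins the play `π` (all plays not won by Duplicator). -/
def SpWinsPlay (dupOwned : C → Prop) (infWin : (ℕ → Option C) → Prop)
    (π : ℕ → Option C) : Prop :=
  (∃ c, EndsAt π c ∧ dupOwned c) ∨ (InfinitePlay π ∧ ¬ infWin π)

/-- Duplicator wins the configuration `c`: she has a strategy winning all plays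
starting in `c`. -/
def DupWins (dupOwned : C → Prop) (move : C → C → Prop)
    (infWin : (ℕ → Option C) → Prop) (c : C) : Prop :=
  ∃ σ : C → C, ValidStrategy dupOwned move σ ∧
    ∀ π, IsPlay move π → π 0 = some c → ConsistentWith dupOwned σ π →
      DupWinsPlay dupOwned infWin π

/-- Spoiler wins the configuration `c`: he has a strategy winning all plays
starting in `c`. -/
def SpWins (dupOwned : C → Prop) (move : C → C → Prop)
    (infWin : (ℕ → Option C) → Prop) (c : C) : Prop :=
  ∃ σ : C → C, ValidStrategy (fun d => ¬ dupOwned d) move σ ∧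
    ∀ π, IsPlay move π → π 0 = some c → ConsistentWith (fun d => ¬ dupOwned d) σ π →
      SpWinsPlay dupOwned infWin π

end Games

/-! ## The limited branching bisimulation (lbb) game -/

/-- Configurations of the lbb game: Spoiler-owned `⟨(s,t)⟩` and Duplicator-owned
`⟨(s,t),(a,s')⟩`. -/
inductive LConf (S : Type u) (A : Type v)
  | sp (p : S × S)
  | dup (p : S × S) (c : A × S)

/-- Ownership in the lbb game. -/
def LConf.dupOwned {S : Type u} {A : Type v} : LConf S A → Prop
  | .sp _ => False
  | .dup _ _ => True

/-- Moves of the lbb game. -/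
inductive LMove {S : Type u} {A : Type v} (L : LTS S A) : LConf S A → LConf S A → Prop
  | sp1 {s t a s'} (h : L.Trans s a s') :
      LMove L (LConf.sp (s, t)) (LConf.dup (s, t) (a, s'))
  | sp2 {s t a t'} (h : L.Trans t a t') :
      LMove L (LConf.sp (s, t)) (LConf.dup (t, s) (a, t'))
  | dup1 {u v u'} :
      LMove L (LConf.dup (u, v) (L.tau, u')) (LConf.sp (u', v))
  | dup2 {u v a u' v'} (h : L.Trans v a v') :
      LMove L (LConf.dup (u, v) (a, u')) (LConf.sp (u', v'))
  | dup3 {u v a u' v'} (h : L.TauStep v v') :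
      LMove L (LConf.dup (u, v) (a, u')) (LConf.sp (u, v'))

/-- `s ≡lb t`: Duplicator wins the lbb game from `⟨(s,t)⟩_S`; finite plays are won
by Duplicator iff Spoiler is stuck, and all infinite plays are won by Duplicator. -/
def LTS.lbbEquiv {S : Type u} {A : Type v} (L : LTS S A) (s t : S) : Prop :=
  DupWins LConf.dupOwned (LMove L) (fun _ => True) (LConf.sp (s, t))

/-! ## The branching bisimulation (bb) game -/

/-- Configurations of the bb game: `⟨(s,t),c,r⟩` owned by Spoiler or Duplicator,
with challenge `c ∈ (A × S) ∪ {†}` (where `none` is `†`) and reward `r`. -/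
inductive BConf (S : Type u) (A : Type v)
  | sp (p : S × S) (c : Option (A × S)) (r : Rw)
  | dup (p : S × S) (c : Option (A × S)) (r : Rw)

/-- Ownership in the bb game. -/
def BConf.dupOwned {S : Type u} {A : Type v} : BConf S A → Prop
  | .sp _ _ _ => False
  | .dup _ _ _ => True

/-- The configuration carries a `✓` reward. -/
def BConf.reward {S : Type u} {A : Type v} : BConf S A → Prop
  | .sp _ _ r => r = Rw.check
  | .dup _ _ r => r = Rw.check

/-- Moves of the bb game. -/
inductive BMove {S : Type u} {A : Type v} (L : LTS S A) : BConf S A → BConf S A → Prop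
  | sp1star {s t c r a s'} (h : L.Trans s a s') (hc : c = some (a, s') ∨ c = none) :
      BMove L (BConf.sp (s, t) c r) (BConf.dup (s, t) (some (a, s')) Rw.star)
  | sp1check {s t c r a s'} (h : L.Trans s a s')
      (hc : ¬(c = some (a, s') ∨ c = none)) :
      BMove L (BConf.sp (s, t) c r) (BConf.dup (s, t) (some (a, s')) Rw.check)
  | sp2 {s t c r a t'} (h : L.Trans t a t') :
      BMove L (BConf.sp (s, t) c r) (BConf.dup (t, s) (some (a, t')) Rw.check)
  | dup1 {u v u' r} :
      BMove L (BConf.dup (u, v) (some (L.tau, u')) r) (BConf.sp (u', v) none Rw.check)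
  | dup2 {u v a u' v' r} (h : L.Trans v a v') :
      BMove L (BConf.dup (u, v) (some (a, u')) r) (BConf.sp (u', v') none Rw.check)
  | dup3 {u v a u' v' r} (h : L.TauStep v v') :
      BMove L (BConf.dup (u, v) (some (a, u')) r)
        (BConf.sp (u, v') (some (a, u')) Rw.star)

/-- `s ≡b t`: Duplicator wins the bb game from `⟨(s,t),†,*⟩_S`, where infinite
plays are won by Duplicator iff they yield infinitely many `✓` rewards. -/
def LTS.bbEquiv {S : Type u} {A : Type v} (L : LTS S A) (s t : S) : Prop :=
  DupWins BConf.dupOwned (BMove L) (BuchiWin BConf.reward) (BConf.sp (s, t) none Rw.star)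

/-! ## The generic bisimulation (gb) game, and its explicit-divergence variant -/

/-- Configurations of the generic games: `⟨(s,t),c,m,r⟩` owned by Spoiler or
Duplicator, with challenge `c ∈ (A × S) ∪ {†}`, partial match
`m ∈ (S × {☹,☺}) ∪ {†}` and reward `r`. -/
inductive GConf (S : Type u) (A : Type v)
  | sp (p : S × S) (c : Option (A × S)) (m : Option (S × Face)) (r : Rw)
  | dup (p : S × S) (c : Option (A × S)) (m : Option (S × Face)) (r : Rw)

/-- Ownership in the generic games. -/
def GConf.dupOwned {S : Type u} {A : Type v} : GConf S A → Prop
  | .sp _ _ _ _ => False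
  | .dup _ _ _ _ => True

/-- The configuration carries a `✓` reward. -/
def GConf.reward {S : Type u} {A : Type v} : GConf S A → Prop
  | .sp _ _ _ r => r = Rw.check
  | .dup _ _ _ r => r = Rw.check

/-- Moves of the `E`-generic bisimulation game. The parameter `rw1` is the reward
handed out by Duplicator's rule (1): `✓` in the gb game, `*` in the gbed game. -/
inductive GMove {S : Type u} {A : Type v} (L : LTS S A) (E : Set Face) (rw1 : Rw) :
    GConf S A → GConf S A → Prop
  | sp1 {s t c m r} (hc : c ≠ none) :
      GMove L E rw1 (GConf.sp (s, t) c m r) (GConf.dup (s, t) c m Rw.star)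
  | sp2a {s t m r a s'} (h : L.Trans s a s') :
      GMove L E rw1 (GConf.sp (s, t) none m r)
        (GConf.dup (s, t) (some (a, s')) (some (t, Face.frown)) Rw.star)
  | sp2b {s t c m r a s'} (h : L.Trans s a s') (hc : c ≠ some (a, s')) :
      GMove L E rw1 (GConf.sp (s, t) c m r)
        (GConf.dup (s, t) (some (a, s')) (some (t, Face.frown)) Rw.check)
  | sp3 {s t c m r a t'} (h : L.Trans t a t') :
      GMove L E rw1 (GConf.sp (s, t) c m r)
        (GConf.dup (t, s) (some (a, t')) (some (s, Face.frown)) Rw.check)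
  | dup1 {u v u' vb f r} :
      GMove L E rw1 (GConf.dup (u, v) (some (L.tau, u')) (some (vb, f)) r)
        (GConf.sp (u', vb) none none rw1)
  | dup2a {u v a u' vb v' r} (h : L.Trans vb a v') :
      GMove L E rw1 (GConf.dup (u, v) (some (a, u')) (some (vb, Face.frown)) r)
        (GConf.sp (u', v') (some (a, u')) (some (v', Face.smile)) Rw.star)
  | dup2b {u v a u' vb v' r} (h : L.Trans vb a v') :
      GMove L E rw1 (GConf.dup (u, v) (some (a, u')) (some (vb, Face.frown)) r)
        (GConf.sp (u', v') none none Rw.check)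
  | dup2c {u v a u' vb v' r} (h : L.Trans vb a v') (hE : Face.smile ∈ E) :
      GMove L E rw1 (GConf.dup (u, v) (some (a, u')) (some (vb, Face.frown)) r)
        (GConf.sp (u, v) (some (a, u')) (some (v', Face.smile)) Rw.star)
  | dup3a {u v a u' vb f v' r} (h : L.TauStep vb v') :
      GMove L E rw1 (GConf.dup (u, v) (some (a, u')) (some (vb, f)) r)
        (GConf.sp (u, v') (some (a, u')) (some (v', f)) Rw.star)
  | dup3b {u v a u' vb v' r} (h : L.TauStep vb v') :
      GMove L E rw1 (GConf.dup (u, v) (some (a, u')) (some (vb, Face.smile)) r)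
        (GConf.sp (u', v') none none Rw.check)
  | dup3c {u v a u' vb f v' r} (h : L.TauStep vb v') (hE : f ∈ E) :
      GMove L E rw1 (GConf.dup (u, v) (some (a, u')) (some (vb, f)) r)
        (GConf.sp (u, v) (some (a, u')) (some (v', f)) Rw.star)

/-- `E(x,y) ⊆ {☹,☺}`: the smallest set containing `☹` when `x = o` and `☺` when
`y = o`. -/
def Exy (x y : XY) : Set Face :=
  {f | (f = Face.frown ∧ x = XY.o) ∨ (f = Face.smile ∧ y = XY.o)}

/-- `s ≡_E t`: Duplicator wins the `E`-generic bisimulation game from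
`⟨(s,t),†,†,*⟩_S`; infinite plays are won by Duplicator iff they yield infinitely
many `✓` rewards. -/
def LTS.gbEquiv {S : Type u} {A : Type v} (L : LTS S A) (E : Set Face) (s t : S) : Prop :=
  DupWins GConf.dupOwned (GMove L E Rw.check) (BuchiWin GConf.reward)
    (GConf.sp (s, t) none none Rw.star)

/-- `s ≡ed_E t`: Duplicator wins the `E`-generic bisimulation with explicit
divergence game from `⟨(s,t),†,†,*⟩_S`. -/
def LTS.gbedEquiv {S : Type u} {A : Type v} (L : LTS S A) (E : Set Face) (s t : S) : Prop :=
  DupWins GConf.dupOwned (GMove L E Rw.star) (BuchiWin GConf.reward)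
    (GConf.sp (s, t) none none Rw.star)

/-- The abstraction function `f(⟨(s,t),c,m,r⟩) = ⟨(s,t),c,r⟩` from configurations
of the generic game to configurations of the bb game, preserving ownership. -/
def fabs {S : Type u} {A : Type v} : GConf S A → BConf S A
  | .sp p c _ r => .sp p c r
  | .dup p c _ r => .dup p c r


/-! ### Auxiliary material: semi-branching bisimulation (Basten) -/

section AuxSemi

variable {S : Type u} {A : Type v}

/-- Semi-branching bisimulation. -/
def IsSemiBB (L : LTS S A) (R : S → S → Prop) : Prop :=
  (∀ s t, R s t → R t s) ∧
  ∀ s t a s', R s t → L.Trans s a s' →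
    (a = L.tau ∧ ∃ t1, L.TauStar t t1 ∧ R s t1 ∧ R s' t1) ∨
    (∃ t1 t', L.TauStar t t1 ∧ L.Trans t1 a t' ∧ R s t1 ∧ R s' t')

/-- Semi-branching bisimilarity. -/
def SB (L : LTS S A) (s t : S) : Prop := ∃ R, IsSemiBB L R ∧ R s t

theorem sb_symm {L : LTS S A} {s t : S} (h : SB L s t) : SB L t s := by
  obtain ⟨R, hR, hst⟩ := h
  exact ⟨R, hR, hR.1 _ _ hst⟩

theorem isSemiBB_sb (L : LTS S A) : IsSemiBB L (SB L) := by
  constructor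
  · exact fun s t h => sb_symm h
  · rintro s t a s' ⟨R, hR, hst⟩ htr
    rcases hR.2 s t a s' hst htr with ⟨ha, t1, hts, h1, h2⟩ | ⟨t1, t', hts, htr', h1, h2⟩
    · exact Or.inl ⟨ha, t1, hts, ⟨R, hR, h1⟩, ⟨R, hR, h2⟩⟩
    · exact Or.inr ⟨t1, t', hts, htr', ⟨R, hR, h1⟩, ⟨R, hR, h2⟩⟩

theorem sb_of_bb {L : LTS S A} {s t : S} (h : L.BranchingBisimilar s t) : SB L s t := by
  obtain ⟨R, hR, hst⟩ := h
  refine ⟨R, ⟨hR.1, ?_⟩, hst⟩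
  intro s t a s' hst htr
  rcases hR.2 s t a s' hst htr with ⟨ha, h1⟩ | ⟨t1, t', hts, htr', h1, h2⟩
  · exact Or.inl ⟨ha, t, Relation.ReflTransGen.refl, hst, h1⟩
  · exact Or.inr ⟨t1, t', hts, htr', h1, h2⟩

theorem sb_tauMatch {L : LTS S A} {s t s₁ : S} (h : SB L s t) (hs : L.TauStar s s₁) :
    ∃ t₁, L.TauStar t t₁ ∧ SB L s₁ t₁ := by
  induction hs using Relation.ReflTransGen.head_induction_on generalizing t with
  | refl => exact ⟨t, Relation.ReflTransGen.refl, h⟩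
  | head hstep _ ih =>
    rcases (isSemiBB_sb L).2 _ _ _ _ h hstep with ⟨_, t1, hts, _, h2⟩ |
        ⟨t1, t', hts, htr', _, h2⟩
    · obtain ⟨t₁, ht₁, hsb⟩ := ih h2
      exact ⟨t₁, hts.trans ht₁, hsb⟩
    · obtain ⟨t₁, ht₁, hsb⟩ := ih h2
      exact ⟨t₁, (hts.tail htr').trans ht₁, hsb⟩

theorem sb_trans {L : LTS S A} {s t u : S} (h1 : SB L s t) (h2 : SB L t u) : SB L s u := by
  refine ⟨fun x y => ∃ z, SB L x z ∧ SB L z y, ⟨?_, ?_⟩, t, h1, h2⟩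
  · rintro x y ⟨z, hxz, hzy⟩
    exact ⟨z, sb_symm hzy, sb_symm hxz⟩
  · rintro x y a x' ⟨z, hxz, hzy⟩ htr
    rcases (isSemiBB_sb L).2 _ _ _ _ hxz htr with ⟨ha, z1, hzs, hx1, hx'1⟩ |
        ⟨z1, z', hzs, htr', hx1, hx'1⟩
    · obtain ⟨y1, hys, hz1y1⟩ := sb_tauMatch hzy hzs
      exact Or.inl ⟨ha, y1, hys, ⟨z1, hx1, hz1y1⟩, ⟨z1, hx'1, hz1y1⟩⟩
    · obtain ⟨y1, hys, hz1y1⟩ := sb_tauMatch hzy hzs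
      rcases (isSemiBB_sb L).2 _ _ _ _ hz1y1 htr' with ⟨ha, y2, hys2, hz1y2, hz'y2⟩ |
          ⟨y2, y', hys2, htr'', hz1y2, hz'y'⟩
      · exact Or.inl ⟨ha, y2, hys.trans hys2, ⟨z1, hx1, hz1y2⟩, ⟨z', hx'1, hz'y2⟩⟩
      · exact Or.inr ⟨y2, y', hys.trans hys2, htr'', ⟨z1, hx1, hz1y2⟩, ⟨z', hx'1, hz'y'⟩⟩

/-- The one-step stuttering lemma for semi-branching bisimilarity. -/
theorem sb_stutterOne {L : LTS S A} {v w vh : S} (hE : SB L v vh) (hstep : L.TauStep v w)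
    (hw : L.TauStar w vh) : SB L v w := by
  classical
  set B : S → S → Prop := fun x y => SB L x y ∨
      (∃ z, L.TauStar x y ∧ L.TauStar y z ∧ SB L x z) ∨
      (∃ z, L.TauStar y x ∧ L.TauStar x z ∧ SB L y z) with hB
  have hBsemi : IsSemiBB L B := by
    constructor
    · rintro x y (h | h | h)
      · exact Or.inl (sb_symm h)
      · exact Or.inr (Or.inr h)
      · exact Or.inr (Or.inl h)
    · rintro x y a x' (h | ⟨z, hxy, hyz, hxz⟩ | ⟨z, hyx, hxz, hyz⟩) htr
      · rcases (isSemiBB_sb L).2 _ _ _ _ h htr with ⟨ha, t1, hts, h1, h2⟩ |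
            ⟨t1, t', hts, htr', h1, h2⟩
        · exact Or.inl ⟨ha, t1, hts, Or.inl h1, Or.inl h2⟩
        · exact Or.inr ⟨t1, t', hts, htr', Or.inl h1, Or.inl h2⟩
      · -- x before y on a τ-path to z, SB x z; x moves, y answers
        rcases (isSemiBB_sb L).2 _ _ _ _ hxz htr with ⟨ha, z1, hzs, h1, h2⟩ |
            ⟨z1, z', hzs, htr', h1, h2⟩
        · exact Or.inl ⟨ha, z1, hyz.trans hzs, Or.inl h1, Or.inl h2⟩
        · exact Or.inr ⟨z1, z', hyz.trans hzs, htr', Or.inl h1, Or.inl h2⟩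
      · -- y before x on a τ-path to z, SB y z; x moves, y answers
        obtain ⟨z₁, hzz₁, hxz₁⟩ := sb_tauMatch hyz hyx
        rcases (isSemiBB_sb L).2 _ _ _ _ hxz₁ htr with ⟨ha, z2, hzs, h1, h2⟩ |
            ⟨z2, z', hzs, htr', h1, h2⟩
        · exact Or.inl ⟨ha, z2, ((hyx.trans hxz).trans hzz₁).trans hzs,
            Or.inl h1, Or.inl h2⟩
        · exact Or.inr ⟨z2, z', ((hyx.trans hxz).trans hzz₁).trans hzs, htr',
            Or.inl h1, Or.inl h2⟩
  exact ⟨B, hBsemi, Or.inr (Or.inl ⟨vh, Relation.ReflTransGen.single hstep, hw, hE⟩)⟩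

end AuxSemi

section AuxStrat

variable {S : Type u} {A : Type v}

/-- `Sol L u b u' n v`: from `v` there is a length-`n` τ-path, all of whose states are
semi-branching bisimilar to `u`, at whose end Duplicator can answer the challenge
`(b, u')`. -/
def Sol (L : LTS S A) (u : S) (b : A) (u' : S) : ℕ → S → Prop
  | 0, v => SB L u v ∧ ((b = L.tau ∧ SB L u' v) ∨ ∃ w, L.Trans v b w ∧ SB L u' w)
  | n+1, v => SB L u v ∧ ∃ v₂, L.TauStep v v₂ ∧ Sol L u b u' n v₂

theorem sol_sb {L : LTS S A} {u : S} {b : A} {u' : S} {n : ℕ} {v : S}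
    (h : Sol L u b u' n v) : SB L u v := by
  cases n <;> exact h.1

theorem sol_pos_elim {L : LTS S A} {u : S} {b : A} {u' : S} {n : ℕ} {v : S}
    (h : Sol L u b u' n v) (hn : n ≠ 0) :
    ∃ v₂, L.TauStep v v₂ ∧ Sol L u b u' (n-1) v₂ := by
  cases n with
  | zero => exact absurd rfl hn
  | succ m => exact h.2

theorem chainSol {L : LTS S A} {u v zh : S} {b : A} {u' : S}
    (hstar : L.TauStar v zh) (huv : SB L u v) (huz : SB L u zh)
    (hbase : (b = L.tau ∧ SB L u' zh) ∨ ∃ w, L.Trans zh b w ∧ SB L u' w) :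
    ∃ n, Sol L u b u' n v := by
  induction hstar using Relation.ReflTransGen.head_induction_on with
  | refl => exact ⟨0, huv, hbase⟩
  | @head v m hstep hrest ih =>
    have hvz : SB L v zh := sb_trans (sb_symm huv) huz
    have hvm : SB L v m := sb_stutterOne hvz hstep hrest
    have hum : SB L u m := sb_trans huv hvm
    obtain ⟨n, hsol⟩ := ih hum
    exact ⟨n + 1, huv, m, hstep, hsol⟩

theorem exSol {L : LTS S A} {u v : S} {b : A} {u' : S}
    (huv : SB L u v) (htr : L.Trans u b u') : ∃ n, Sol L u b u' n v := by
  rcases (isSemiBB_sb L).2 _ _ _ _ huv htr with ⟨hb, v1, hvs, h1, h2⟩ |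
      ⟨v1, v', hvs, htr', h1, h2⟩
  · exact chainSol hvs huv h1 (Or.inl ⟨hb, h2⟩)
  · exact chainSol hvs huv h1 (Or.inr ⟨v', htr', h2⟩)

theorem no_bmove_dup_none {L : LTS S A} {p : S × S} {r : Rw} (d : BConf S A) :
    ¬ BMove L (BConf.dup p none r) d := by
  intro h; cases h

open Classical in
/-- Duplicator's positional strategy in the bb game. -/
noncomputable def dupStrat (L : LTS S A) : BConf S A → BConf S A := fun c =>
  match c with
  | BConf.dup (u, v) (some (b, u')) r =>
    if _ : b = L.tau ∧ SB L u' v then BConf.sp (u', v) none Rw.check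
    else if h2 : ∃ w, L.Trans v b w ∧ SB L u' w then
      BConf.sp (u', Classical.choose h2) none Rw.check
    else if h3 : ∃ n, Sol L u b u' n v then
      if h0 : Nat.find h3 = 0 then BConf.dup (u, v) (some (b, u')) r
      else BConf.sp (u, Classical.choose (sol_pos_elim (Nat.find_spec h3) h0))
        (some (b, u')) Rw.star
    else if h4 : ∃ d, BMove L (BConf.dup (u, v) (some (b, u')) r) d then
      Classical.choose h4
    else BConf.dup (u, v) (some (b, u')) r
  | c => c

theorem dupStrat_valid (L : LTS S A) :
    ValidStrategy BConf.dupOwned (BMove L) (dupStrat L) := by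
  classical
  rintro c hc ⟨d, hd⟩
  match c with
  | BConf.sp p ch r => exact absurd hc (by simp [BConf.dupOwned])
  | BConf.dup (u, v) none r => exact absurd hd (no_bmove_dup_none d)
  | BConf.dup (u, v) (some (b, u')) r =>
    show BMove L _ (dupStrat L (BConf.dup (u, v) (some (b, u')) r))
    rw [dupStrat]
    split_ifs with h1 h2 h3 h0 h4
    · obtain ⟨hb, _⟩ := h1; subst hb; exact BMove.dup1
    · exact BMove.dup2 (Classical.choose_spec h2).1
    · -- Nat.find h3 = 0 : impossible since ¬h1 ∧ ¬h2
      exfalso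
      have hs := Nat.find_spec h3
      rw [h0] at hs
      rcases hs.2 with h | h
      · exact h1 ⟨h.1, h.2⟩
      · exact h2 h
    · exact BMove.dup3 (Classical.choose_spec (sol_pos_elim (Nat.find_spec h3) h0)).1
    · exact Classical.choose_spec h4
    · exact absurd ⟨d, hd⟩ h4

end AuxStrat

section AuxWin

variable {S : Type u} {A : Type v}

/-- The invariant maintained by Duplicator's strategy in the bb game. -/
def BInv (L : LTS S A) : BConf S A → Prop
  | BConf.sp (u, v) c _ => SB L u v ∧ ∀ b u', c = some (b, u') → L.Trans u b u'
  | BConf.dup (u, v) c _ => SB L u v ∧ c ≠ none ∧ ∀ b u', c = some (b, u') → L.Trans u b u'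

theorem binv_move_sp {L : LTS S A} {p : S × S} {c : Option (A × S)} {r : Rw}
    {d : BConf S A} (h : BInv L (BConf.sp p c r)) (hm : BMove L (BConf.sp p c r) d) :
    BInv L d := by
  obtain ⟨u, v⟩ := p
  cases hm with
  | sp1star htr hc =>
    exact ⟨h.1, by simp, fun b u' hbu => by cases hbu; exact htr⟩
  | sp1check htr hc =>
    exact ⟨h.1, by simp, fun b u' hbu => by cases hbu; exact htr⟩
  | sp2 htr =>
    exact ⟨sb_symm h.1, by simp, fun b u' hbu => by cases hbu; exact htr⟩

theorem binv_move_dup {L : LTS S A} {u v : S} {b : A} {u' : S} {r : Rw}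
    (h : BInv L (BConf.dup (u, v) (some (b, u')) r)) :
    BInv L (dupStrat L (BConf.dup (u, v) (some (b, u')) r)) := by
  classical
  obtain ⟨hsb, -, htrf⟩ := h
  have htr : L.Trans u b u' := htrf b u' rfl
  rw [dupStrat]
  split_ifs with h1 h2 h3 h0 h4
  · exact ⟨h1.2, fun b u' h => by cases h⟩
  · exact ⟨(Classical.choose_spec h2).2, fun b u' h => by cases h⟩
  · exact ⟨hsb, by simp, fun b' u'' h => by cases h; exact htr⟩
  · refine ⟨sol_sb (Classical.choose_spec (sol_pos_elim (Nat.find_spec h3) h0)).2,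
      fun b' u'' hh => ?_⟩
    cases hh; exact htr
  · exact absurd (exSol hsb htr) h3
  · exact absurd (exSol hsb htr) h3

theorem binv_dup_not_stuck {L : LTS S A} {u v : S} {ch : Option (A × S)} {r : Rw}
    (h : BInv L (BConf.dup (u, v) ch r)) : ∃ d, BMove L (BConf.dup (u, v) ch r) d := by
  obtain ⟨hsb, hne, htrf⟩ := h
  match ch with
  | none => exact absurd rfl hne
  | some (b, u') =>
    have htr : L.Trans u b u' := htrf b u' rfl
    obtain ⟨n, hsol⟩ := exSol hsb htr
    match n, hsol with
    | 0, ⟨_, Or.inl ⟨hb, _⟩⟩ => subst hb; exact ⟨_, BMove.dup1⟩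
    | 0, ⟨_, Or.inr ⟨w, hw, _⟩⟩ => exact ⟨_, BMove.dup2 hw⟩
    | n+1, ⟨_, v₂, hstep, _⟩ => exact ⟨_, BMove.dup3 hstep⟩

theorem play_binv {L : LTS S A} {π : ℕ → Option (BConf S A)}
    (hplay : IsPlay (BMove L) π) (hcons : ConsistentWith BConf.dupOwned (dupStrat L) π)
    {c₀ : BConf S A} (h0 : π 0 = some c₀) (hi : BInv L c₀) :
    ∀ i c, π i = some c → BInv L c := by
  intro i
  induction i with
  | zero => intro c hc; rw [h0] at hc; cases hc; exact hi
  | succ n ih =>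
    intro d hd
    rcases hcn : π n with _ | c
    · exact absurd hd (by rw [hplay.2.2 n hcn]; simp)
    have hbm := hplay.1 n c d hcn hd
    have hic := ih c hcn
    cases c with
    | sp p ch r => exact binv_move_sp hic hbm
    | dup p ch r =>
      have hσ := hcons n _ d hcn trivial hd
      subst hσ
      obtain ⟨u, v⟩ := p
      match ch, hic with
      | none, hic => exact absurd rfl hic.2.1
      | some (b, u'), hic => exact binv_move_dup hic

theorem isPlay_none_mono {C : Type _} {move : C → C → Prop} {π : ℕ → Option C}
    (hp : IsPlay move π) : ∀ i j, i ≤ j → π i = none → π j = none := by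
  intro i j hij hi
  induction j, hij using Nat.le_induction with
  | base => exact hi
  | succ n hn ih => exact hp.2.2 n ih

/-- The key Büchi argument: from any Duplicator configuration satisfying the invariant
whose pending challenge has a solution of length at most `m`, a check reward occurs
later in the play. -/
theorem check_later {L : LTS S A} {π : ℕ → Option (BConf S A)}
    (hplay : IsPlay (BMove L) π) (hcons : ConsistentWith BConf.dupOwned (dupStrat L) π)
    (hinf : InfinitePlay π) :
    ∀ m i u v b u' r, π i = some (BConf.dup (u, v) (some (b, u')) r) →
      (∃ n, n ≤ m ∧ Sol L u b u' n v) →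
      ∃ j, i ≤ j ∧ ∃ c, π j = some c ∧ BConf.reward c := by
  classical
  intro m
  induction m with
  | zero =>
    intro i u v b u' r hc hsol
    obtain ⟨n, hn, hsoln⟩ := hsol
    obtain rfl : n = 0 := Nat.le_zero.mp hn
    obtain ⟨d, hd⟩ := Option.ne_none_iff_exists'.mp (hinf (i + 1))
    have hσ := hcons i _ d hc trivial hd
    rw [dupStrat] at hσ
    split_ifs at hσ with h1 h2 h3 h0 h4
    · exact ⟨i + 1, by omega, d, hd, by rw [hσ]; exact rfl⟩
    · exact ⟨i + 1, by omega, d, hd, by rw [hσ]; exact rfl⟩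
    · exfalso
      rcases hsoln.2 with h | h
      · exact h1 ⟨h.1, h.2⟩
      · exact h2 h
    · exact absurd (Nat.le_zero.mp (Nat.find_min' h3 hsoln)) h0
    · exact absurd ⟨0, hsoln⟩ h3
    · exact absurd ⟨0, hsoln⟩ h3
  | succ m ih =>
    intro i u v b u' r hc hsol
    obtain ⟨n, hn, hsoln⟩ := hsol
    obtain ⟨d, hd⟩ := Option.ne_none_iff_exists'.mp (hinf (i + 1))
    have hσ := hcons i _ d hc trivial hd
    rw [dupStrat] at hσ
    split_ifs at hσ with h1 h2 h3 h0 h4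
    · exact ⟨i + 1, by omega, d, hd, by rw [hσ]; exact rfl⟩
    · exact ⟨i + 1, by omega, d, hd, by rw [hσ]; exact rfl⟩
    · exfalso
      have hs := Nat.find_spec h3
      rw [h0] at hs
      rcases hs.2 with h | h
      · exact h1 ⟨h.1, h.2⟩
      · exact h2 h
    · -- dup3 step: measure decreases
      subst hσ
      set v₂ := Classical.choose (sol_pos_elim (Nat.find_spec h3) h0) with hv₂
      have hspec := Classical.choose_spec (sol_pos_elim (Nat.find_spec h3) h0)
      obtain ⟨e, he⟩ := Option.ne_none_iff_exists'.mp (hinf (i + 2))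
      have hbm := hplay.1 (i + 1) _ e hd he
      cases hbm with
      | sp1star htr hc' =>
        rcases hc' with hc' | hc'
        · cases hc'
          have hfind : Nat.find h3 ≤ n := Nat.find_min' h3 hsoln
          have hmle : Nat.find h3 - 1 ≤ m := by
            have h0' : Nat.find h3 ≠ 0 := h0
            omega
          obtain ⟨j, hj, hcheck⟩ := ih (i + 2) u v₂ b u' Rw.star he
            ⟨Nat.find h3 - 1, hmle, hspec.2⟩
          exact ⟨j, by omega, hcheck⟩
        · cases hc'
      | sp1check htr hc' => exact ⟨i + 2, by omega, _, he, rfl⟩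
      | sp2 htr => exact ⟨i + 2, by omega, _, he, rfl⟩
    · exact absurd ⟨n, hsoln⟩ h3
    · exact absurd ⟨n, hsoln⟩ h3

/-- Direction 1: branching bisimilar states are bb-game equivalent. -/
theorem bb_to_game {L : LTS S A} {s t : S} (h : L.BranchingBisimilar s t) :
    L.bbEquiv s t := by
  classical
  have hsb : SB L s t := sb_of_bb h
  refine ⟨dupStrat L, dupStrat_valid L, ?_⟩
  intro π hplay h0 hcons
  have hbinv : ∀ i c, π i = some c → BInv L c :=
    play_binv hplay hcons h0 ⟨hsb, fun b u' hh => by cases hh⟩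
  by_cases hinf : InfinitePlay π
  · refine Or.inr ⟨hinf, ?_⟩
    intro n
    obtain ⟨c, hc⟩ := Option.ne_none_iff_exists'.mp (hinf n)
    cases c with
    | dup p ch r =>
      obtain ⟨u, v⟩ := p
      have hic := hbinv n _ hc
      match ch, hic, hc with
      | none, hic, hc => exact absurd rfl hic.2.1
      | some (b, u'), hic, hc =>
        have htr : L.Trans u b u' := hic.2.2 b u' rfl
        obtain ⟨k, hsol⟩ := exSol hic.1 htr
        obtain ⟨j, hj, hcheck⟩ :=
          check_later hplay hcons hinf k n u v b u' r hc ⟨k, le_refl _, hsol⟩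
        exact ⟨j, hj, hcheck⟩
    | sp p ch r =>
      obtain ⟨u, v⟩ := p
      obtain ⟨d, hd⟩ := Option.ne_none_iff_exists'.mp (hinf (n + 1))
      have hbm := hplay.1 n _ d hc hd
      cases hbm with
      | @sp1star _ _ _ _ a s' htr hc' =>
        have hid := hbinv (n + 1) _ hd
        have htr' : L.Trans u a s' := hid.2.2 a s' rfl
        obtain ⟨k, hsol⟩ := exSol hid.1 htr'
        obtain ⟨j, hj, hcheck⟩ :=
          check_later hplay hcons hinf k (n + 1) u v a s' Rw.star hd ⟨k, le_refl _, hsol⟩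
        exact ⟨j, by omega, hcheck⟩
      | sp1check htr hc' => exact ⟨n + 1, by omega, _, hd, rfl⟩
      | sp2 htr => exact ⟨n + 1, by omega, _, hd, rfl⟩
  · -- finite play: it must end in a Spoiler configuration
    left
    have hex : ∃ i, π i = none := by
      by_contra hno
      push_neg at hno
      exact hinf fun i => hno i
    have hk := Nat.find_spec hex
    set k := Nat.find hex with hkdef
    have hkpos : k ≠ 0 := by
      intro h0'
      rw [h0'] at hk
      rw [h0] at hk
      cases hk
    obtain ⟨e, he⟩ : ∃ e, π (k - 1) = some e := by
      rcases hme : π (k - 1) with _ | e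
      · exact absurd hme (Nat.find_min hex (by omega))
      · exact ⟨e, rfl⟩
    have hnone : π (k - 1 + 1) = none := by
      have : k - 1 + 1 = k := by omega
      rw [this]; exact hk
    refine ⟨e, ⟨k - 1, he, hnone⟩, ?_⟩
    intro hdup
    cases e with
    | sp p ch r => exact hdup
    | dup p ch r =>
      obtain ⟨u, v⟩ := p
      obtain ⟨d, hm⟩ := binv_dup_not_stuck (hbinv _ _ he)
      exact hplay.2.1 (k - 1) _ he hnone d hm

end AuxWin

section AuxExtract

variable {S : Type u} {A : Type v}

/-- `σ` wins all plays from `c`. -/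
def WinsAll (L : LTS S A) (σ : BConf S A → BConf S A) (c : BConf S A) : Prop :=
  ∀ π, IsPlay (BMove L) π → π 0 = some c → ConsistentWith BConf.dupOwned σ π →
    DupWinsPlay BConf.dupOwned (BuchiWin BConf.reward) π

theorem winsAll_step {L : LTS S A} {σ : BConf S A → BConf S A} {c d : BConf S A}
    (h : WinsAll L σ c) (hm : BMove L c d) (hd : BConf.dupOwned c → d = σ c) :
    WinsAll L σ d := by
  intro ρ hρ h0 hcons
  set τ : ℕ → Option (BConf S A) := fun i => Nat.casesOn i (some c) (fun j => ρ j) with hτ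
  have hτ0 : τ 0 = some c := rfl
  have hτs : ∀ j, τ (j + 1) = ρ j := fun j => rfl
  have hplayτ : IsPlay (BMove L) τ := by
    refine ⟨?_, ?_, ?_⟩
    · intro i x y h1 h2
      cases i with
      | zero =>
        rw [hτ0] at h1; cases h1
        rw [hτs, h0] at h2; cases h2
        exact hm
      | succ j => exact hρ.1 j x y h1 (by rw [← hτs]; exact h2)
    · intro i x h1 h2
      cases i with
      | zero => rw [hτs, h0] at h2; cases h2
      | succ j => exact hρ.2.1 j x h1 (by rw [← hτs]; exact h2)
    · intro i h1
      cases i with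
      | zero => rw [hτ0] at h1; cases h1
      | succ j => rw [hτs] at h1 ⊢; exact hρ.2.2 j h1
  have hconsτ : ConsistentWith BConf.dupOwned σ τ := by
    intro i x y h1 hown h2
    cases i with
    | zero =>
      rw [hτ0] at h1; cases h1
      rw [hτs, h0] at h2; cases h2
      exact hd hown
    | succ j => exact hcons j x y h1 hown h2
  rcases h τ hplayτ hτ0 hconsτ with ⟨e, ⟨i, hei, hnone⟩, hnd⟩ | ⟨hinf, hbuchi⟩
  · cases i with
    | zero => rw [hτs, h0] at hnone; cases hnone
    | succ j => exact Or.inl ⟨e, ⟨j, hei, hnone⟩, hnd⟩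
  · refine Or.inr ⟨fun i => hinf (i + 1), fun n => ?_⟩
    obtain ⟨i, hin, c', hc', hr⟩ := hbuchi (n + 1)
    cases i with
    | zero => omega
    | succ j => exact ⟨j, by omega, c', hc', hr⟩

theorem winsAll_not_stuck {L : LTS S A} {σ : BConf S A → BConf S A} {c : BConf S A}
    (h : WinsAll L σ c) (hc : BConf.dupOwned c) (hstuck : ∀ d, ¬ BMove L c d) :
    False := by
  classical
  set ρ : ℕ → Option (BConf S A) := fun i => if i = 0 then some c else none with hρ
  have hplay : IsPlay (BMove L) ρ := by
    refine ⟨?_, ?_, ?_⟩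
    · intro i x y h1 h2
      exfalso
      have : ρ (i + 1) = none := if_neg (by omega)
      rw [this] at h2; cases h2
    · intro i x h1 h2 d
      have hi : i = 0 := by
        by_contra hne
        rw [show ρ i = none from if_neg hne] at h1; cases h1
      rw [hi, show ρ 0 = some c from rfl] at h1; cases h1
      exact hstuck d
    · intro i _
      exact if_neg (by omega)
  have hcons : ConsistentWith BConf.dupOwned σ ρ := by
    intro i x y h1 hown h2
    exfalso
    have : ρ (i + 1) = none := if_neg (by omega)
    rw [this] at h2; cases h2
  rcases h ρ hplay rfl hcons with ⟨e, ⟨i, hei, _⟩, hnd⟩ | ⟨hinf, _⟩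
  · have hi : i = 0 := by
      by_contra hne
      rw [show ρ i = none from if_neg hne] at hei; cases hei
    rw [hi, show ρ 0 = some c from rfl] at hei; cases hei
    exact hnd hc
  · exact hinf 1 (if_neg (by omega))

/-- Iterating a partial successor function from a start configuration. -/
def iterPlay {C : Type _} (g : C → Option C) (c0 : C) : ℕ → Option C
  | 0 => some c0
  | n + 1 => (iterPlay g c0 n).bind g

open Classical in
/-- Spoiler's probing behaviour: he persistently re-challenges `(a, u')` whenever the
pair starts with `u` and the pending challenge is `(a, u')`; otherwise (and at
Duplicator configurations following `σ`) any legal move is taken. -/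
noncomputable def probe (L : LTS S A) (σ : BConf S A → BConf S A) (u : S) (a : A)
    (u' : S) : BConf S A → Option (BConf S A) := fun c =>
  match c with
  | BConf.dup p ch r =>
    if _ : ∃ d, BMove L (BConf.dup p ch r) d then some (σ (BConf.dup p ch r)) else none
  | BConf.sp (x, w) ch r =>
    if x = u ∧ ch = some (a, u') then some (BConf.dup (x, w) (some (a, u')) Rw.star)
    else if h : ∃ d, BMove L (BConf.sp (x, w) ch r) d then some (Classical.choose h)
    else none

theorem probe_move {L : LTS S A} {σ : BConf S A → BConf S A} {u : S} {a : A} {u' : S}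
    (hval : ValidStrategy BConf.dupOwned (BMove L) σ) (ht : L.Trans u a u')
    {c d : BConf S A} (h : probe L σ u a u' c = some d) : BMove L c d := by
  classical
  cases c with
  | dup p ch r =>
    rw [probe] at h
    split_ifs at h with hm
    · cases h; exact hval _ trivial hm
  | sp p ch r =>
    obtain ⟨x, w⟩ := p
    rw [probe] at h
    split_ifs at h with h1 h2
    · obtain ⟨rfl, hch⟩ := h1
      cases h
      exact BMove.sp1star ht (Or.inl hch)
    · cases h; exact Classical.choose_spec h2

theorem probe_none {L : LTS S A} {σ : BConf S A → BConf S A} {u : S} {a : A} {u' : S}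
    {c : BConf S A} (h : probe L σ u a u' c = none) : ∀ d, ¬ BMove L c d := by
  classical
  cases c with
  | dup p ch r =>
    rw [probe] at h
    split_ifs at h with hm
    · exact fun d hd => hm ⟨d, hd⟩
  | sp p ch r =>
    obtain ⟨x, w⟩ := p
    rw [probe] at h
    split_ifs at h with h1 h2
    · exact fun d hd => h2 ⟨d, hd⟩

theorem probe_dup {L : LTS S A} {σ : BConf S A → BConf S A} {u : S} {a : A} {u' : S}
    {p : S × S} {ch : Option (A × S)} {r : Rw} {d : BConf S A}
    (h : probe L σ u a u' (BConf.dup p ch r) = some d) : d = σ (BConf.dup p ch r) := by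
  classical
  rw [probe] at h
  split_ifs at h with hm
  · cases h; rfl

theorem probe_isPlay {L : LTS S A} {σ : BConf S A → BConf S A} {u : S} {a : A} {u' : S}
    (hval : ValidStrategy BConf.dupOwned (BMove L) σ) (ht : L.Trans u a u')
    (c0 : BConf S A) :
    IsPlay (BMove L) (iterPlay (probe L σ u a u') c0) ∧
      ConsistentWith BConf.dupOwned σ (iterPlay (probe L σ u a u') c0) := by
  set g := probe L σ u a u' with hg
  set π := iterPlay g c0 with hπ
  have hsucc : ∀ i, π (i + 1) = (π i).bind g := fun i => rfl
  refine ⟨⟨?_, ?_, ?_⟩, ?_⟩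
  · intro i c d h1 h2
    rw [hsucc, h1] at h2
    exact probe_move hval ht h2
  · intro i c h1 h2 d hd
    rw [hsucc, h1] at h2
    exact probe_none h2 d hd
  · intro i h1
    rw [hsucc, h1]; rfl
  · intro i c d h1 hown h2
    rw [hsucc, h1] at h2
    cases c with
    | sp p ch r => exact absurd hown (by simp [BConf.dupOwned])
    | dup p ch r => exact probe_dup (u := u) (a := a) (u' := u') h2

/-- Duplicator wins some Spoiler configuration on the pair `(u, v)`. -/
def Wany (L : LTS S A) (u v : S) : Prop :=
  ∃ (c : Option (A × S)) (r : Rw) (σ : BConf S A → BConf S A),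
    ValidStrategy BConf.dupOwned (BMove L) σ ∧ WinsAll L σ (BConf.sp (u, v) c r)

/-- The central extraction lemma: if Duplicator wins the configuration in which
Spoiler has just challenged `(a, u')` on the pair `(u, v)`, then she can answer it
in the branching fashion. -/
theorem extract {L : LTS S A} {σ : BConf S A → BConf S A}
    (hval : ValidStrategy BConf.dupOwned (BMove L) σ) {u v : S} {a : A} {u' : S} {r : Rw}
    (hw : WinsAll L σ (BConf.dup (u, v) (some (a, u')) r)) (ht : L.Trans u a u') :
    (a = L.tau ∧ Wany L u' v) ∨
      ∃ t1 t', L.TauStar v t1 ∧ L.Trans t1 a t' ∧ (t1 = v ∨ Wany L u t1) ∧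
        Wany L u' t' := by
  classical
  by_contra hCon
  set g := probe L σ u a u' with hg
  set π := iterPlay g (BConf.dup (u, v) (some (a, u')) r) with hπ
  obtain ⟨hplay0, hcons0⟩ := probe_isPlay hval ht (BConf.dup (u, v) (some (a, u')) r)
  have hplay : IsPlay (BMove L) π := hplay0
  have hcons : ConsistentWith BConf.dupOwned σ π := hcons0
  have hsucc : ∀ i, π (i + 1) = (π i).bind g := fun i => rfl
  -- The block step: at every Duplicator stage, Duplicator must dawdle.
  have blockStep : ∀ n w rw, π (2 * n) = some (BConf.dup (u, w) (some (a, u')) rw) →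
      L.TauStar v w → WinsAll L σ (BConf.dup (u, w) (some (a, u')) rw) →
      (w = v ∨ Wany L u w) → (w = v ∨ ∃ w₀, L.TauStar v w₀ ∧ L.TauStep w₀ w ∧
        (w₀ = v ∨ Wany L u w₀)) →
      ∃ w₂, π (2 * n + 1) = some (BConf.sp (u, w₂) (some (a, u')) Rw.star) ∧
        L.TauStep w w₂ ∧
        π (2 * n + 2) = some (BConf.dup (u, w₂) (some (a, u')) Rw.star) ∧
        WinsAll L σ (BConf.dup (u, w₂) (some (a, u')) Rw.star) ∧ Wany L u w₂ := by
    intro n w rw hcn hstar hwn hwany hpred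
    have hmove : ∃ d, BMove L (BConf.dup (u, w) (some (a, u')) rw) d := by
      by_contra hstuck
      push_neg at hstuck
      exact winsAll_not_stuck hwn trivial hstuck
    have h1 : π (2 * n + 1) = some (σ (BConf.dup (u, w) (some (a, u')) rw)) := by
      rw [hsucc, hcn]
      show probe L σ u a u' (BConf.dup (u, w) (some (a, u')) rw) = _
      rw [probe, dif_pos hmove]
    have hσm : BMove L (BConf.dup (u, w) (some (a, u')) rw)
        (σ (BConf.dup (u, w) (some (a, u')) rw)) := hval _ trivial hmove
    generalize hsc : σ (BConf.dup (u, w) (some (a, u')) rw) = sc at hσm h1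
    cases hσm with
    | dup1 =>
      -- challenge is silent and Duplicator stops: contradiction with ¬Con
      exfalso
      have hwsc : WinsAll L σ (BConf.sp (u', w) none Rw.check) :=
        winsAll_step hwn BMove.dup1 (fun _ => hsc.symm)
      have hwany' : Wany L u' w := ⟨none, Rw.check, σ, hval, hwsc⟩
      rcases hpred with rfl | ⟨w₀, hst₀, hstep₀, hw₀⟩
      · exact hCon (Or.inl ⟨rfl, hwany'⟩)
      · exact hCon (Or.inr ⟨w₀, w, hst₀, hstep₀, hw₀, hwany'⟩)
    | dup2 htr' =>
      exfalso
      have hwsc := winsAll_step hwn (BMove.dup2 htr') (fun _ => hsc.symm)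
      exact hCon (Or.inr ⟨w, _, hstar, htr', hwany,
        ⟨none, Rw.check, σ, hval, hwsc⟩⟩)
    | dup3 hstep =>
      rename_i w₂
      have hwsc : WinsAll L σ (BConf.sp (u, w₂) (some (a, u')) Rw.star) :=
        winsAll_step hwn (BMove.dup3 hstep) (fun _ => hsc.symm)
      have h2 : π (2 * n + 2) = some (BConf.dup (u, w₂) (some (a, u')) Rw.star) := by
        rw [hsucc, h1]
        show probe L σ u a u' (BConf.sp (u, w₂) (some (a, u')) Rw.star) = _
        rw [probe, if_pos (⟨rfl, rfl⟩ : u = u ∧ some (a, u') = some (a, u'))]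
      have hwd : WinsAll L σ (BConf.dup (u, w₂) (some (a, u')) Rw.star) :=
        winsAll_step hwsc (BMove.sp1star ht (Or.inl rfl)) (fun hh => hh.elim)
      exact ⟨w₂, h1, hstep, h2, hwd, ⟨some (a, u'), Rw.star, σ, hval, hwsc⟩⟩
  -- The stage invariant.
  have P : ∀ n, ∃ w rw, π (2 * n) = some (BConf.dup (u, w) (some (a, u')) rw) ∧
      L.TauStar v w ∧ WinsAll L σ (BConf.dup (u, w) (some (a, u')) rw) ∧
      (w = v ∨ Wany L u w) ∧ (w = v ∨ ∃ w₀, L.TauStar v w₀ ∧ L.TauStep w₀ w ∧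
        (w₀ = v ∨ Wany L u w₀)) := by
    intro n
    induction n with
    | zero => exact ⟨v, r, rfl, Relation.ReflTransGen.refl, hw, Or.inl rfl, Or.inl rfl⟩
    | succ m ihm =>
      obtain ⟨w, rw, hcn, hstar, hwn, hwany, hpred⟩ := ihm
      obtain ⟨w₂, h1, hstep, h2, hwd, hwany₂⟩ := blockStep m w rw hcn hstar hwn hwany hpred
      have h2' : π (2 * (m + 1)) = some (BConf.dup (u, w₂) (some (a, u')) Rw.star) := by
        have : 2 * (m + 1) = 2 * m + 2 := by omega
        rw [this]; exact h2
      exact ⟨w₂, Rw.star, h2', hstar.tail hstep, hwd, Or.inr hwany₂,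
        Or.inr ⟨w, hstar, hstep, hwany⟩⟩
  -- the play is infinite
  have hinf : InfinitePlay π := by
    intro i hnone
    obtain ⟨w, rw, hcn, -⟩ := P i
    have := isPlay_none_mono hplay i (2 * i) (by omega) hnone
    rw [this] at hcn; cases hcn
  -- and it contains no check reward after position 0
  have hnocheck : ∀ j, 1 ≤ j → ∀ c, π j = some c → ¬ BConf.reward c := by
    intro j hj c hc
    rcases Nat.even_or_odd j with ⟨k, hk⟩ | ⟨k, hk⟩
    · -- j = 2k with k ≥ 1, so j = 2(k-1)+2
      obtain ⟨w, rw, hcn, hstar, hwn, hwany, hpred⟩ := P (k - 1)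
      obtain ⟨w₂, h1, hstep, h2, -⟩ := blockStep (k - 1) w rw hcn hstar hwn hwany hpred
      have hj2 : j = 2 * (k - 1) + 2 := by omega
      rw [hj2, h2] at hc
      cases hc
      intro hr
      exact Rw.noConfusion hr
    · -- j = 2k+1
      obtain ⟨w, rw, hcn, hstar, hwn, hwany, hpred⟩ := P k
      obtain ⟨w₂, h1, hstep, h2, -⟩ := blockStep k w rw hcn hstar hwn hwany hpred
      have hj2 : j = 2 * k + 1 := by omega
      rw [hj2, h1] at hc
      cases hc
      intro hr
      exact Rw.noConfusion hr
  rcases hw π hplay rfl hcons with ⟨e, ⟨i, hei, hnone⟩, -⟩ | ⟨-, hbuchi⟩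
  · exact hinf (i + 1) hnone
  · obtain ⟨i, hi1, c, hc, hr⟩ := hbuchi 1
    exact hnocheck i hi1 c hc hr

/-- Direction 2: bb-game equivalent states are branching bisimilar. -/
theorem game_to_bb {L : LTS S A} {s t : S} (h : L.bbEquiv s t) :
    L.BranchingBisimilar s t := by
  classical
  refine ⟨fun x y => Wany L x y ∨ Wany L y x, ⟨?_, ?_⟩, ?_⟩
  · rintro x y (h' | h')
    exacts [Or.inr h', Or.inl h']
  · rintro x y a x' (⟨c, r, σ, hval, hw⟩ | ⟨c, r, σ, hval, hw⟩) htr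
    · have hstep : ∃ rw, WinsAll L σ (BConf.dup (x, y) (some (a, x')) rw) := by
        by_cases hcc : c = some (a, x') ∨ c = none
        · exact ⟨Rw.star, winsAll_step hw (BMove.sp1star htr hcc) (fun hh => hh.elim)⟩
        · exact ⟨Rw.check, winsAll_step hw (BMove.sp1check htr hcc) (fun hh => hh.elim)⟩
      obtain ⟨rw, hw'⟩ := hstep
      rcases extract hval hw' htr with ⟨ha, hwany⟩ | ⟨t1, t', hst, htr', ht1, ht'⟩
      · exact Or.inl ⟨ha, Or.inl hwany⟩
      · refine Or.inr ⟨t1, t', hst, htr', ?_, Or.inl ht'⟩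
        rcases ht1 with rfl | hww
        · exact Or.inl ⟨c, r, σ, hval, hw⟩
        · exact Or.inl hww
    · have hw' : WinsAll L σ (BConf.dup (x, y) (some (a, x')) Rw.check) :=
        winsAll_step hw (BMove.sp2 htr) (fun hh => hh.elim)
      rcases extract hval hw' htr with ⟨ha, hwany⟩ | ⟨t1, t', hst, htr', ht1, ht'⟩
      · exact Or.inl ⟨ha, Or.inl hwany⟩
      · refine Or.inr ⟨t1, t', hst, htr', ?_, Or.inl ht'⟩
        rcases ht1 with rfl | hww
        · exact Or.inr ⟨c, r, σ, hval, hw⟩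
        · exact Or.inl hww
  · obtain ⟨σ, hval, hwin⟩ := h
    exact Or.inl ⟨none, Rw.star, σ, hval, hwin⟩

end AuxExtract

/-- The branching bisimulation game characterises branching
bisimilarity: `s ≈b t` iff `s ≡b t`. -/
theorem branchingBisimilar_iff_bbEquiv {S : Type u} {A : Type v} (L : LTS S A)
    (s t : S) :
    L.BranchingBisimilar s t ↔ L.bbEquiv s t :=
  ⟨fun h => bb_to_game h, fun h => game_to_bb h⟩

end GamesBisim
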